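/- arXiv:math/0508177 — 3 statements merged into one kernel-verified Lean document; each statement's English description precedes it below -/
import Mathlib

section
/- In the free algebra k⟨x,y,z⟩, define elements f^n_{u,v,w} for u+v+w = n, u,v,w ≥ 0, by f^0_{0,0,0} = 1 and the recursion f^n_{u,v,w} = a^v b^w f^{n-1}_{u-1,v,w} x + c^w f^{n-1}_{u,v-1,w} y + f^{n-1}_{u,v,w-1} z (terms with a negative index are zero), where a, b, c ∈ k are nonzero. Then f^n_{u,v,w} also satisfies the left-sided recursion f^n_{u,v,w} = x f^{n-1}_{u-1,v,w} + a^u y f^{n-1}_{u,v-1,w} + b^u c^v z f^{n-1}_{u,v,w-1}. -/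
/- In k⟨x,y,z⟩, with f^n_{u,v,w} defined by f^0_{0,0,0} = 1 and the right-sided
   recursion f^n_{u,v,w} = a^v b^w f^{n-1}_{u-1,v,w}·x + c^w f^{n-1}_{u,v-1,w}·y
   + f^{n-1}_{u,v,w-1}·z (negative indices give 0), one also has the left-sided
   recursion f^n_{u,v,w} = x·f^{n-1}_{u-1,v,w} + a^u y·f^{n-1}_{u,v-1,w}
   + b^u c^v z·f^{n-1}_{u,v,w-1}. -/
theorem stmt6 (k : Type*) [Field k] (a b c : k)
    (ha : a ≠ 0) (hb : b ≠ 0) (hc : c ≠ 0)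
    (x y z : FreeAlgebra k (Fin 3))
    (hx : x = FreeAlgebra.ι k 0) (hy : y = FreeAlgebra.ι k 1)
    (hz : z = FreeAlgebra.ι k 2)
    (f : ℤ → ℤ → ℤ → FreeAlgebra k (Fin 3))
    (h0 : f 0 0 0 = 1)
    (hneg : ∀ u v w : ℤ, u < 0 ∨ v < 0 ∨ w < 0 → f u v w = 0)
    (hrec : ∀ u v w : ℤ, 0 ≤ u → 0 ≤ v → 0 ≤ w → 1 ≤ u + v + w →
      f u v w = (a ^ v * b ^ w) • (f (u - 1) v w * x)
        + (c ^ w) • (f u (v - 1) w * y)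
        + f u v (w - 1) * z) :
    ∀ u v w : ℤ, 0 ≤ u → 0 ≤ v → 0 ≤ w → 1 ≤ u + v + w →
      f u v w = x * f (u - 1) v w
        + (a ^ u) • (y * f u (v - 1) w)
        + (b ^ u * c ^ v) • (z * f u v (w - 1)) := by
  have hshift : ∀ (t : k), t ≠ 0 → ∀ m : ℤ, t ^ m = t * t ^ (m - 1) := by
    intro t ht m
    rw [← zpow_one_add₀ ht]
    norm_num
  have hrec' : ∀ u v w : ℤ, 1 ≤ u + v + w →
      f u v w = (a ^ v * b ^ w) • (f (u - 1) v w * x)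
        + (c ^ w) • (f u (v - 1) w * y)
        + f u v (w - 1) * z := by
    intro u v w hs
    by_cases h : 0 ≤ u ∧ 0 ≤ v ∧ 0 ≤ w
    · exact hrec u v w h.1 h.2.1 h.2.2 hs
    · rw [hneg u v w (by omega), hneg (u - 1) v w (by omega),
        hneg u (v - 1) w (by omega), hneg u v (w - 1) (by omega)]
      simp
  have key : ∀ n : ℕ, ∀ u v w : ℤ, u + v + w = (n : ℤ) + 1 →
      f u v w = x * f (u - 1) v w
        + (a ^ u) • (y * f u (v - 1) w)
        + (b ^ u * c ^ v) • (z * f u v (w - 1)) := by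
    intro n
    induction n with
    | zero =>
      intro u v w hs
      by_cases h : 0 ≤ u ∧ 0 ≤ v ∧ 0 ≤ w
      · obtain ⟨hu, hv, hw⟩ := h
        rcases (by omega : (u = 1 ∧ v = 0 ∧ w = 0) ∨ (u = 0 ∧ v = 1 ∧ w = 0) ∨
            (u = 0 ∧ v = 0 ∧ w = 1)) with ⟨rfl, rfl, rfl⟩ | ⟨rfl, rfl, rfl⟩ | ⟨rfl, rfl, rfl⟩
        · rw [hrec' 1 0 0 (by norm_num)]
          norm_num [h0, hneg 1 (-1) 0 (by omega), hneg 1 0 (-1) (by omega)]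
        · rw [hrec' 0 1 0 (by norm_num)]
          norm_num [h0, hneg (-1) 1 0 (by omega), hneg 0 1 (-1) (by omega)]
        · rw [hrec' 0 0 1 (by norm_num)]
          norm_num [h0, hneg (-1) 0 1 (by omega), hneg 0 (-1) 1 (by omega)]
      · rw [hneg u v w (by omega), hneg (u - 1) v w (by omega),
          hneg u (v - 1) w (by omega), hneg u v (w - 1) (by omega)]
        simp
    | succ n ih =>
      intro u v w hs
      by_cases h : 0 ≤ u ∧ 0 ≤ v ∧ 0 ≤ w
      · obtain ⟨hu, hv, hw⟩ := h
        conv_lhs => rw [hrec' u v w (by omega),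
          ih (u - 1) v w (by omega), ih u (v - 1) w (by omega), ih u v (w - 1) (by omega)]
        conv_rhs => rw [hrec' (u - 1) v w (by omega), hrec' u (v - 1) w (by omega),
          hrec' u v (w - 1) (by omega)]
        simp only [mul_add, add_mul, smul_add, smul_mul_assoc, mul_smul_comm, smul_smul,
          mul_assoc]
        rw [hshift a ha u, hshift a ha v, hshift b hb u, hshift b hb w,
          hshift c hc v, hshift c hc w]
        module
      · rw [hneg u v w (by omega), hneg (u - 1) v w (by omega),
          hneg u (v - 1) w (by omega), hneg u v (w - 1) (by omega)]
        simp
  intro u v w hu hv hw h1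
  exact key (u + v + w - 1).toNat u v w (by omega)
end

section
/- With f^n_{u,v,w} ∈ k⟨x,y,z⟩ as defined by the recursion f^n_{u,v,w} = a^v b^w f^{n-1}_{u-1,v,w} x + c^w f^{n-1}_{u,v-1,w} y + f^{n-1}_{u,v,w-1} z (and f^0_{0,0,0} = 1), for every r with 0 ≤ r ≤ n one has the comultiplicative factorization f^n_{u,v,w} = Σ_{s=max(0,u+r−n)}^{min(u,r)} Σ_{t=max(0,v+r−n)}^{min(v,r)} a^{(u−s)t} b^{(u−s)(r−s−t)} c^{(v−t)(r−s−t)} f^r_{s,t,r−s−t} · f^{n−r}_{u−s,v−t,w+s+t−r}. -/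
/-! Fix `r` and write `F(u,v,w)` for the right-hand side, summed over the whole square
`0 ≤ s, t ≤ r` (the extra terms vanish). Since `f` vanishes at negative indices, the recursion
of `f` holds at every integer point with `u + v + w ≥ 1`. Expanding the second factor
`f (u-s) (v-t) (w+s+t-r)` of every summand by this recursion shows that `F` obeys the same
recursion as `f` as soon as `u + v + w > r`: the powers of `a`, `b`, `c` produced by the
expansion are exactly what turns the coefficient at `u` into the one at `u - 1` (resp. `v - 1`).
On the diagonal `u + v + w = r` only the term `s = u`, `t = v` survives and it equals `f u v w`,
so induction on `u + v + w - r` gives `f = F`. -/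

open Finset

namespace TwistedFactorization

variable {k A : Type*} [Field k] [Ring A] [Algebra k A]

def VanishesOffOctant (f : ℤ → ℤ → ℤ → A) : Prop :=
  ∀ u v w : ℤ, u < 0 ∨ v < 0 ∨ w < 0 → f u v w = 0

def SatisfiesRecursion (a b c : k) (x y z : A) (f : ℤ → ℤ → ℤ → A) : Prop :=
  ∀ u v w : ℤ, 0 ≤ u → 0 ≤ v → 0 ≤ w → 1 ≤ u + v + w →
    f u v w = (a ^ v * b ^ w) • (f (u - 1) v w * x) + (c ^ w) • (f u (v - 1) w * y)
      + f u v (w - 1) * z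

def coeff (a b c : k) (u v r s t : ℤ) : k :=
  a ^ ((u - s) * t) * b ^ ((u - s) * (r - s - t)) * c ^ ((v - t) * (r - s - t))

def summand (a b c : k) (f : ℤ → ℤ → ℤ → A) (u v w r s t : ℤ) : A :=
  coeff a b c u v r s t • (f s t (r - s - t) * f (u - s) (v - t) (w + s + t - r))

noncomputable def factorSum (a b c : k) (f : ℤ → ℤ → ℤ → A) (u v w r : ℤ) : A :=
  ∑ s ∈ Icc 0 r, ∑ t ∈ Icc 0 r, summand a b c f u v w r s t

variable {a b c : k} {x y z : A} {f : ℤ → ℤ → ℤ → A}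

theorem recursion_of_one_le (hneg : VanishesOffOctant f) (hrec : SatisfiesRecursion a b c x y z f)
    {u v w : ℤ} (h : 1 ≤ u + v + w) :
    f u v w = (a ^ v * b ^ w) • (f (u - 1) v w * x) + (c ^ w) • (f u (v - 1) w * y)
      + f u v (w - 1) * z := by
  by_cases hoct : 0 ≤ u ∧ 0 ≤ v ∧ 0 ≤ w
  · exact hrec u v w hoct.1 hoct.2.1 hoct.2.2 h
  · rw [hneg u v w (by omega), hneg (u - 1) v w (by omega), hneg u (v - 1) w (by omega),
      hneg u v (w - 1) (by omega)]
    simp only [zero_mul, smul_zero, add_zero]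

theorem summand_eq_zero (hneg : VanishesOffOctant f) {u v w r s t : ℤ}
    (h : s < 0 ∨ t < 0 ∨ r - s - t < 0 ∨ u - s < 0 ∨ v - t < 0 ∨ w + s + t - r < 0) :
    summand a b c f u v w r s t = 0 := by
  unfold summand
  by_cases hleft : s < 0 ∨ t < 0 ∨ r - s - t < 0
  · rw [hneg _ _ _ hleft, zero_mul, smul_zero]
  · rw [hneg (u - s) (v - t) (w + s + t - r) (by omega), mul_zero, smul_zero]

theorem factorSum_eq_zero (hneg : VanishesOffOctant f) {u v w : ℤ} (h : u < 0 ∨ v < 0 ∨ w < 0)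
    (r : ℤ) : factorSum a b c f u v w r = 0 := by
  refine sum_eq_zero fun s hs => sum_eq_zero fun t ht => summand_eq_zero hneg ?_
  rw [mem_Icc] at hs ht
  omega

theorem factorSum_diag (h0 : f 0 0 0 = 1) (hneg : VanishesOffOctant f) {u v w : ℤ}
    (hu : 0 ≤ u) (hv : 0 ≤ v) (hw : 0 ≤ w) :
    factorSum a b c f u v w (u + v + w) = f u v w := by
  have hoff : ∀ s t, (s, t) ≠ (u, v) → summand a b c f u v w (u + v + w) s t = 0 := by
    intro s t hst
    refine summand_eq_zero hneg ?_
    rw [Ne, Prod.mk.injEq] at hst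
    omega
  have hmem : (u, v) ∈ Icc 0 (u + v + w) ×ˢ Icc 0 (u + v + w) := by
    simp only [mem_product, mem_Icc]; omega
  rw [factorSum, ← sum_product', sum_eq_single_of_mem (u, v) hmem fun p _ hp => hoff p.1 p.2 hp]
  simp only [summand, coeff, sub_self, zero_mul, zpow_zero, mul_one, h0, one_smul,
    show u + v + w - u - v = w by ring, show w + u + v - (u + v + w) = 0 by ring]

theorem coeff_mul_shift_fst (ha : a ≠ 0) (hb : b ≠ 0) (u v w r s t : ℤ) :
    coeff a b c u v r s t * (a ^ (v - t) * b ^ (w + s + t - r)) =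
      a ^ v * b ^ w * coeff a b c (u - 1) v r s t := by
  have hpow_a : a ^ ((u - s) * t) * a ^ (v - t) = a ^ v * a ^ ((u - 1 - s) * t) := by
    rw [← zpow_add₀ ha, ← zpow_add₀ ha]; ring_nf
  have hpow_b : b ^ ((u - s) * (r - s - t)) * b ^ (w + s + t - r) =
      b ^ w * b ^ ((u - 1 - s) * (r - s - t)) := by
    rw [← zpow_add₀ hb, ← zpow_add₀ hb]; ring_nf
  calc _ = (a ^ ((u - s) * t) * a ^ (v - t)) * (b ^ ((u - s) * (r - s - t)) * b ^ (w + s + t - r))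
        * c ^ ((v - t) * (r - s - t)) := by unfold coeff; ring
    _ = _ := by rw [hpow_a, hpow_b, coeff, sub_right_comm u 1 s]; ring

theorem coeff_mul_shift_snd (hc : c ≠ 0) (u v w r s t : ℤ) :
    coeff a b c u v r s t * c ^ (w + s + t - r) = c ^ w * coeff a b c u (v - 1) r s t := by
  have hpow_c : c ^ ((v - t) * (r - s - t)) * c ^ (w + s + t - r) =
      c ^ w * c ^ ((v - 1 - t) * (r - s - t)) := by
    rw [← zpow_add₀ hc, ← zpow_add₀ hc]; ring_nf
  unfold coeff
  rw [mul_assoc, hpow_c, sub_right_comm v 1 t]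
  ring

theorem summand_recursion (ha : a ≠ 0) (hb : b ≠ 0) (hc : c ≠ 0) (hneg : VanishesOffOctant f)
    (hrec : SatisfiesRecursion a b c x y z f) {u v w r : ℤ} (h : r + 1 ≤ u + v + w)
    (s t : ℤ) :
    summand a b c f u v w r s t =
      (a ^ v * b ^ w) • (summand a b c f (u - 1) v w r s t * x)
        + (c ^ w) • (summand a b c f u (v - 1) w r s t * y)
        + summand a b c f u v (w - 1) r s t * z := by
  unfold summand
  rw [recursion_of_one_le hneg hrec (u := u - s) (by omega), sub_right_comm u s 1,
    sub_right_comm v t 1, show w + s + t - r - 1 = w - 1 + s + t - r by ring]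
  simp only [mul_add, smul_add, mul_smul_comm, smul_smul, smul_mul_assoc, mul_assoc]
  rw [coeff_mul_shift_fst ha hb, coeff_mul_shift_snd hc, mul_assoc (a ^ v)]

theorem factorSum_recursion (ha : a ≠ 0) (hb : b ≠ 0) (hc : c ≠ 0)
    (hneg : VanishesOffOctant f) (hrec : SatisfiesRecursion a b c x y z f) {u v w r : ℤ}
    (h : r + 1 ≤ u + v + w) :
    factorSum a b c f u v w r =
      (a ^ v * b ^ w) • (factorSum a b c f (u - 1) v w r * x)
        + (c ^ w) • (factorSum a b c f u (v - 1) w r * y)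
        + factorSum a b c f u v (w - 1) r * z := by
  simp only [factorSum, summand_recursion ha hb hc hneg hrec h, sum_add_distrib, sum_mul,
    smul_sum]

theorem eq_factorSum (ha : a ≠ 0) (hb : b ≠ 0) (hc : c ≠ 0) (h0 : f 0 0 0 = 1)
    (hneg : VanishesOffOctant f) (hrec : SatisfiesRecursion a b c x y z f) {r : ℤ} (hr : 0 ≤ r)
    (m : ℕ) {u v w : ℤ} (h : u + v + w = r + m) : f u v w = factorSum a b c f u v w r := by
  induction m generalizing u v w with
  | zero =>
    by_cases hoff : u < 0 ∨ v < 0 ∨ w < 0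
    · rw [hneg u v w hoff, factorSum_eq_zero hneg hoff]
    · obtain rfl : r = u + v + w := by omega
      exact (factorSum_diag h0 hneg (by omega) (by omega) (by omega)).symm
  | succ m ih =>
    rw [recursion_of_one_le hneg hrec (by omega), factorSum_recursion ha hb hc hneg hrec (by omega),
      ih (by omega), ih (by omega), ih (by omega)]

theorem sum_box_eq_factorSum (hneg : VanishesOffOctant f) {u v w r n : ℤ} (hn : u + v + w = n) :
    ∑ s ∈ Icc (max 0 (u + r - n)) (min u r), ∑ t ∈ Icc (max 0 (v + r - n)) (min v r),
      summand a b c f u v w r s t = factorSum a b c f u v w r := by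
  rw [factorSum, ← sum_product', ← sum_product']
  refine sum_subset (product_subset_product (Icc_subset_Icc (le_max_left _ _) (min_le_right _ _))
    (Icc_subset_Icc (le_max_left _ _) (min_le_right _ _))) fun p hp hbox => summand_eq_zero hneg ?_
  simp only [mem_product, mem_Icc, max_le_iff, le_min_iff] at hp hbox
  omega

end TwistedFactorization

open TwistedFactorization in
theorem stmt7_general (k : Type*) [Field k] (a b c : k)
    (ha : a ≠ 0) (hb : b ≠ 0) (hc : c ≠ 0)
    (x y z : FreeAlgebra k (Fin 3))
    (f : ℤ → ℤ → ℤ → FreeAlgebra k (Fin 3))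
    (h0 : f 0 0 0 = 1)
    (hneg : ∀ u v w : ℤ, u < 0 ∨ v < 0 ∨ w < 0 → f u v w = 0)
    (hrec : ∀ u v w : ℤ, 0 ≤ u → 0 ≤ v → 0 ≤ w → 1 ≤ u + v + w →
      f u v w = (a ^ v * b ^ w) • (f (u - 1) v w * x)
        + (c ^ w) • (f u (v - 1) w * y)
        + f u v (w - 1) * z) :
    ∀ u v w r n : ℤ, 0 ≤ u → 0 ≤ v → 0 ≤ w → u + v + w = n → 0 ≤ r → r ≤ n →
      f u v w =
        ∑ s ∈ Finset.Icc (max 0 (u + r - n)) (min u r),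
          ∑ t ∈ Finset.Icc (max 0 (v + r - n)) (min v r),
            (a ^ ((u - s) * t) * b ^ ((u - s) * (r - s - t))
              * c ^ ((v - t) * (r - s - t))) •
              (f s t (r - s - t) * f (u - s) (v - t) (w + s + t - r)) := by
  intro u v w r n _ _ _ hn hr hrn
  rw [eq_factorSum ha hb hc h0 hneg hrec hr (n - r).toNat (u := u) (by omega)]
  exact (sum_box_eq_factorSum hneg hn).symm

theorem stmt7 (k : Type*) [Field k] (a b c : k)
    (ha : a ≠ 0) (hb : b ≠ 0) (hc : c ≠ 0)
    (x y z : FreeAlgebra k (Fin 3))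
    (hx : x = FreeAlgebra.ι k 0) (hy : y = FreeAlgebra.ι k 1)
    (hz : z = FreeAlgebra.ι k 2)
    (f : ℤ → ℤ → ℤ → FreeAlgebra k (Fin 3))
    (h0 : f 0 0 0 = 1)
    (hneg : ∀ u v w : ℤ, u < 0 ∨ v < 0 ∨ w < 0 → f u v w = 0)
    (hrec : ∀ u v w : ℤ, 0 ≤ u → 0 ≤ v → 0 ≤ w → 1 ≤ u + v + w →
      f u v w = (a ^ v * b ^ w) • (f (u - 1) v w * x)
        + (c ^ w) • (f u (v - 1) w * y)
        + f u v (w - 1) * z) :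
    ∀ u v w r n : ℤ, 0 ≤ u → 0 ≤ v → 0 ≤ w → u + v + w = n → 0 ≤ r → r ≤ n →
      f u v w =
        ∑ s ∈ Finset.Icc (max 0 (u + r - n)) (min u r),
          ∑ t ∈ Finset.Icc (max 0 (v + r - n)) (min v r),
            (a ^ ((u - s) * t) * b ^ ((u - s) * (r - s - t))
              * c ^ ((v - t) * (r - s - t))) •
              (f s t (r - s - t) * f (u - s) (v - t) (w + s + t - r)) :=
  stmt7_general k a b c ha hb hc x y z f h0 hneg hrec
end

section
/- Let E = k⟨x,y,z⟩/(yx − xy, zx − xz, zy − cyz) be quantum 3-space with a = b = 1 and c ∈ k not a root of unity, char k ≠ 2, graded with x, y, z in degree 1. Then the graded centre of E equals the subalgebra k[x²] generated by x². -/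
/-- The relations yx − xy, zx − xz, zy − c·yz of quantum 3-space with a = b = 1. -/
inductive relQS (k : Type*) [Field k] (c : k) :
    FreeAlgebra k (Fin 3) → FreeAlgebra k (Fin 3) → Prop
  | yx : relQS k c (FreeAlgebra.ι k 1 * FreeAlgebra.ι k 0)
      (FreeAlgebra.ι k 0 * FreeAlgebra.ι k 1)
  | zx : relQS k c (FreeAlgebra.ι k 2 * FreeAlgebra.ι k 0)
      (FreeAlgebra.ι k 0 * FreeAlgebra.ι k 2)
  | zy : relQS k c (FreeAlgebra.ι k 2 * FreeAlgebra.ι k 1)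
      (c • (FreeAlgebra.ι k 1 * FreeAlgebra.ι k 2))

/-!
The ordered monomials `x^i y^j z^l` form a basis of `E`. They span because a generator times a
monomial is a scalar multiple of a monomial. They are linearly independent because `E` acts on
`k[ℕ³]`, with `x`, `y` acting as shifts and `z` as a shift twisted by `c^j`, and then
`x^i y^j z^l` sends the basis vector at `0` to the one at `(i, j, l)`.

The generator `x` is central, while `y` and `z` commute with monomials up to the factors
`x^i y^j z^l · y = c^l · x^i y^(j+1) z^l` and `z · x^i y^j z^l = c^j · x^i y^j z^(l+1)`.
Comparing coefficients in `w u = (-1)^n u w` for `u = x, y, z` shows that a nonzero graded-central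
`w` of degree `n` has sign `+1` and involves only monomials with `j = l = 0`, since `c` is not a
root of unity. So `w` is a multiple of `x^n` with `n` even, as `char k ≠ 2`.
-/

theorem Module.Basis.repr_apply_of_apply_eq_smul {ι R M : Type*} [CommSemiring R]
    [AddCommMonoid M] [Module R M] (b : Module.Basis ι R M) (T : M →ₗ[R] M) {σ : ι → ι}
    (hσ : σ.Injective) (f : ι → R) (hT : ∀ i, T (b i) = f i • b (σ i)) (m : M) (i : ι) :
    b.repr (T m) (σ i) = f i * b.repr m i := by
  have h : Finsupp.lapply (σ i) ∘ₗ b.repr.toLinearMap ∘ₗ T =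
      f i • (Finsupp.lapply i ∘ₗ b.repr.toLinearMap) := b.ext fun j => by
    by_cases hj : j = i
    · simp [hT, hj]
    · simp [hT, hσ.eq_iff, hj]
  exact LinearMap.congr_fun h m

namespace QuantumThreeSpace

variable {k : Type*} [Field k] (c : k)

noncomputable def gen (i : Fin 3) : RingQuot (relQS k c) :=
  RingQuot.mkAlgHom k (relQS k c) (FreeAlgebra.ι k i)

noncomputable def X : RingQuot (relQS k c) := gen c 0
noncomputable def Y : RingQuot (relQS k c) := gen c 1
noncomputable def Z : RingQuot (relQS k c) := gen c 2

lemma Y_mul_X : Y c * X c = X c * Y c := by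
  simpa [X, Y, gen] using RingQuot.mkAlgHom_rel k (relQS.yx (c := c))

lemma Z_mul_X : Z c * X c = X c * Z c := by
  simpa [X, Z, gen] using RingQuot.mkAlgHom_rel k (relQS.zx (c := c))

lemma Z_mul_Y : Z c * Y c = c • (Y c * Z c) := by
  simpa [Y, Z, gen] using RingQuot.mkAlgHom_rel k (relQS.zy (c := c))

lemma adjoin_range_gen : Algebra.adjoin k (Set.range (gen c)) = ⊤ := by
  rw [show gen c = RingQuot.mkAlgHom k (relQS k c) ∘ FreeAlgebra.ι k from rfl, Set.range_comp,
    Algebra.adjoin_image, FreeAlgebra.adjoin_range_ι, Algebra.map_top,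
    AlgHom.range_eq_top]
  exact RingQuot.mkAlgHom_surjective k _

lemma commute_X (w : RingQuot (relQS k c)) : Commute (X c) w := by
  refine Algebra.commute_of_mem_adjoin_of_forall_mem_commute (s := Set.range (gen c))
    (by rw [adjoin_range_gen]; trivial) ?_
  rintro _ ⟨i, rfl⟩
  fin_cases i
  exacts [Commute.refl _, (Y_mul_X c).symm, (Z_mul_X c).symm]

lemma Z_pow_mul_Y (l : ℕ) : Z c ^ l * Y c = c ^ l • (Y c * Z c ^ l) := by
  induction l with
  | zero => simp
  | succ l ih =>
    rw [pow_succ, mul_assoc, Z_mul_Y, mul_smul_comm, ← mul_assoc, ih, smul_mul_assoc, smul_smul,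
      mul_assoc, ← pow_succ, ← pow_succ']

lemma Z_mul_Y_pow (j : ℕ) : Z c * Y c ^ j = c ^ j • (Y c ^ j * Z c) := by
  induction j with
  | zero => simp
  | succ j ih =>
    rw [pow_succ, ← mul_assoc, ih, smul_mul_assoc, mul_assoc, Z_mul_Y, mul_smul_comm, smul_smul,
      ← mul_assoc, ← pow_succ, pow_succ]

noncomputable def monomial (p : ℕ × ℕ × ℕ) : RingQuot (relQS k c) :=
  X c ^ p.1 * Y c ^ p.2.1 * Z c ^ p.2.2

lemma monomial_zero : monomial c 0 = 1 := by
  simp [monomial]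

lemma monomial_mk_zero_zero (i : ℕ) : monomial c (i, 0, 0) = X c ^ i := by
  simp [monomial]

lemma X_mul_monomial (p : ℕ × ℕ × ℕ) : X c * monomial c p = monomial c (p + (1, 0, 0)) := by
  simp only [monomial, Prod.fst_add, Prod.snd_add, add_zero, pow_succ', mul_assoc]

lemma Y_mul_monomial (p : ℕ × ℕ × ℕ) : Y c * monomial c p = monomial c (p + (0, 1, 0)) := by
  simp only [monomial, Prod.fst_add, Prod.snd_add, add_zero, pow_succ', ← mul_assoc,
    ((commute_X c _).pow_left _).eq]

lemma Z_mul_monomial (p : ℕ × ℕ × ℕ) :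
    Z c * monomial c p = c ^ p.2.1 • monomial c (p + (0, 0, 1)) := by
  rw [monomial, monomial, ← mul_assoc, ← mul_assoc, ← ((commute_X c (Z c)).pow_left _).eq,
    mul_assoc (X c ^ _), Z_mul_Y_pow]
  simp only [Prod.fst_add, Prod.snd_add, add_zero, mul_smul_comm, smul_mul_assoc, mul_assoc,
    pow_succ']

lemma monomial_mul_Y (p : ℕ × ℕ × ℕ) :
    monomial c p * Y c = c ^ p.2.2 • monomial c (p + (0, 1, 0)) := by
  simp only [monomial, Prod.fst_add, Prod.snd_add, add_zero]
  rw [mul_assoc, Z_pow_mul_Y, mul_smul_comm, ← mul_assoc, mul_assoc _ _ (Y c), ← pow_succ]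

lemma monomial_mul_Z (p : ℕ × ℕ × ℕ) : monomial c p * Z c = monomial c (p + (0, 0, 1)) := by
  simp only [monomial, Prod.fst_add, Prod.snd_add, add_zero, pow_succ, mul_assoc]

noncomputable def shiftX : Module.End k ((ℕ × ℕ × ℕ) →₀ k) :=
  Finsupp.lmapDomain k k (· + (1, 0, 0))

noncomputable def shiftY : Module.End k ((ℕ × ℕ × ℕ) →₀ k) :=
  Finsupp.lmapDomain k k (· + (0, 1, 0))

noncomputable def twistedShiftZ : Module.End k ((ℕ × ℕ × ℕ) →₀ k) :=
  Finsupp.lsum k fun p => c ^ p.2.1 • Finsupp.lsingle (p + (0, 0, 1))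

@[simp] lemma shiftX_single (p : ℕ × ℕ × ℕ) (r : k) :
    shiftX (Finsupp.single p r) = Finsupp.single (p + (1, 0, 0)) r := by
  simp [shiftX]

@[simp] lemma shiftY_single (p : ℕ × ℕ × ℕ) (r : k) :
    shiftY (Finsupp.single p r) = Finsupp.single (p + (0, 1, 0)) r := by
  simp [shiftY]

@[simp] lemma twistedShiftZ_single (p : ℕ × ℕ × ℕ) (r : k) :
    twistedShiftZ c (Finsupp.single p r) = c ^ p.2.1 • Finsupp.single (p + (0, 0, 1)) r := by
  simp [twistedShiftZ]

lemma shiftY_mul_shiftX :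
    (shiftY : Module.End k ((ℕ × ℕ × ℕ) →₀ k)) * shiftX = shiftX * shiftY :=
  Finsupp.lhom_ext fun p r => by
    simp only [Module.End.mul_apply, shiftX_single, shiftY_single, add_right_comm]

lemma twistedShiftZ_mul_shiftX : twistedShiftZ c * shiftX = shiftX * twistedShiftZ c :=
  Finsupp.lhom_ext fun p r => by
    simp only [Module.End.mul_apply, shiftX_single, twistedShiftZ_single, map_smul,
      Prod.snd_add, Prod.fst_add, add_zero, add_right_comm]

lemma twistedShiftZ_mul_shiftY : twistedShiftZ c * shiftY = c • (shiftY * twistedShiftZ c) :=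
  Finsupp.lhom_ext fun p r => by
    simp only [Module.End.mul_apply, LinearMap.smul_apply, shiftY_single, twistedShiftZ_single,
      map_smul, smul_smul, Prod.snd_add, Prod.fst_add, add_right_comm, pow_succ']

noncomputable def rep : RingQuot (relQS k c) →ₐ[k] Module.End k ((ℕ × ℕ × ℕ) →₀ k) :=
  RingQuot.liftAlgHom k ⟨FreeAlgebra.lift k ![shiftX, shiftY, twistedShiftZ c], by
    rintro _ _ ⟨⟩ <;> simp only [map_mul, map_smul, FreeAlgebra.lift_ι_apply]
    exacts [shiftY_mul_shiftX, twistedShiftZ_mul_shiftX c, twistedShiftZ_mul_shiftY c]⟩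

@[simp] lemma rep_X : rep c (X c) = shiftX := by
  simp [rep, X, gen]

@[simp] lemma rep_Y : rep c (Y c) = shiftY := by
  simp [rep, Y, gen]

@[simp] lemma rep_Z : rep c (Z c) = twistedShiftZ c := by
  simp [rep, Z, gen]

lemma shiftX_pow_single (i : ℕ) (p : ℕ × ℕ × ℕ) (r : k) :
    (shiftX ^ i) (Finsupp.single p r) = Finsupp.single (p + (i, 0, 0)) r := by
  induction i with
  | zero => simp [Prod.mk_zero_zero]
  | succ i ih => simp [pow_succ', Module.End.mul_apply, ih, add_assoc]

lemma shiftY_pow_single (j : ℕ) (p : ℕ × ℕ × ℕ) (r : k) :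
    (shiftY ^ j) (Finsupp.single p r) = Finsupp.single (p + (0, j, 0)) r := by
  induction j with
  | zero => simp [Prod.mk_zero_zero]
  | succ j ih => simp [pow_succ', Module.End.mul_apply, ih, add_assoc]

lemma twistedShiftZ_pow_single_zero (l : ℕ) (r : k) :
    (twistedShiftZ c ^ l) (Finsupp.single 0 r) = Finsupp.single (0, 0, l) r := by
  induction l with
  | zero => rfl
  | succ l ih => simp [pow_succ', Module.End.mul_apply, ih]

lemma rep_monomial_single_zero (p : ℕ × ℕ × ℕ) :
    rep c (monomial c p) (Finsupp.single 0 1) = Finsupp.single p 1 := by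
  simp [monomial, Module.End.mul_apply, twistedShiftZ_pow_single_zero, shiftY_pow_single,
    shiftX_pow_single, Prod.mk_zero_zero]

lemma linearIndependent_monomial : LinearIndependent k (monomial c) := by
  refine LinearIndependent.of_comp
    (LinearMap.applyₗ (Finsupp.single 0 1) ∘ₗ (rep c).toLinearMap) ?_
  convert Finsupp.linearIndependent_single_one (R := k) (ι := ℕ × ℕ × ℕ) with p
  exact rep_monomial_single_zero c p

def degree (p : ℕ × ℕ × ℕ) : ℕ := p.1 + p.2.1 + p.2.2

lemma gen_mul_monomial (i : Fin 3) (p : ℕ × ℕ × ℕ) :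
    ∃ (r : k) (q : ℕ × ℕ × ℕ),
      degree q = degree p + 1 ∧ gen c i * monomial c p = r • monomial c q := by
  fin_cases i
  · exact ⟨1, p + (1, 0, 0), by simp only [degree, Prod.fst_add, Prod.snd_add]; omega,
      by rw [one_smul]; exact X_mul_monomial c p⟩
  · exact ⟨1, p + (0, 1, 0), by simp only [degree, Prod.fst_add, Prod.snd_add]; omega,
      by rw [one_smul]; exact Y_mul_monomial c p⟩
  · exact ⟨_, p + (0, 0, 1), by simp only [degree, Prod.fst_add, Prod.snd_add]; omega,
      Z_mul_monomial c p⟩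

lemma prod_map_gen_eq_smul_monomial (l : List (Fin 3)) :
    ∃ (r : k) (p : ℕ × ℕ × ℕ),
      degree p = l.length ∧ (l.map (gen c)).prod = r • monomial c p := by
  induction l with
  | nil => exact ⟨1, 0, rfl, by simp [monomial_zero]⟩
  | cons i l ih =>
    obtain ⟨r, p, hp, hl⟩ := ih
    obtain ⟨s, q, hq, hi⟩ := gen_mul_monomial c i p
    refine ⟨r * s, q, by simp [hq, hp], ?_⟩
    rw [List.map_cons, List.prod_cons, hl, mul_smul_comm, hi, smul_smul]

lemma span_monomial_eq_top : Submodule.span k (Set.range (monomial c)) = ⊤ := by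
  have hwords : ∀ w ∈ Submonoid.closure (Set.range (gen c)), ∃ l : List (Fin 3),
      w = (l.map (gen c)).prod := by
    intro w hw
    induction hw using Submonoid.closure_induction_left with
    | one => exact ⟨[], rfl⟩
    | mul_left _ hx _ _ ih =>
      obtain ⟨i, rfl⟩ := hx
      obtain ⟨l, rfl⟩ := ih
      exact ⟨i :: l, rfl⟩
  rw [eq_top_iff, ← Algebra.top_toSubmodule, ← adjoin_range_gen, Algebra.adjoin_eq_span,
    Submodule.span_le]
  intro w hw
  obtain ⟨l, rfl⟩ := hwords w hw
  obtain ⟨r, p, -, h⟩ := prod_map_gen_eq_smul_monomial c l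
  exact h ▸ Submodule.smul_mem _ r (Submodule.subset_span ⟨p, rfl⟩)

noncomputable def monomialBasis : Module.Basis (ℕ × ℕ × ℕ) k (RingQuot (relQS k c)) :=
  .mk (linearIndependent_monomial c) (span_monomial_eq_top c).ge

@[simp] lemma coe_monomialBasis : ⇑(monomialBasis c) = monomial c :=
  Module.Basis.coe_mk _ _

lemma repr_X_mul (w : RingQuot (relQS k c)) (p : ℕ × ℕ × ℕ) :
    (monomialBasis c).repr (X c * w) (p + (1, 0, 0)) = (monomialBasis c).repr w p := by
  simpa using (monomialBasis c).repr_apply_of_apply_eq_smul (LinearMap.mulLeft k (X c))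
    (add_left_injective _) 1 (fun q => by simp [X_mul_monomial]) w p

lemma repr_Y_mul (w : RingQuot (relQS k c)) (p : ℕ × ℕ × ℕ) :
    (monomialBasis c).repr (Y c * w) (p + (0, 1, 0)) = (monomialBasis c).repr w p := by
  simpa using (monomialBasis c).repr_apply_of_apply_eq_smul (LinearMap.mulLeft k (Y c))
    (add_left_injective _) 1 (fun q => by simp [Y_mul_monomial]) w p

lemma repr_Z_mul (w : RingQuot (relQS k c)) (p : ℕ × ℕ × ℕ) :
    (monomialBasis c).repr (Z c * w) (p + (0, 0, 1)) = c ^ p.2.1 * (monomialBasis c).repr w p :=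
  (monomialBasis c).repr_apply_of_apply_eq_smul (LinearMap.mulLeft k (Z c))
    (add_left_injective (0, 0, 1)) (fun q => c ^ q.2.1) (fun q => by simp [Z_mul_monomial]) w p

lemma repr_mul_Y (w : RingQuot (relQS k c)) (p : ℕ × ℕ × ℕ) :
    (monomialBasis c).repr (w * Y c) (p + (0, 1, 0)) = c ^ p.2.2 * (monomialBasis c).repr w p :=
  (monomialBasis c).repr_apply_of_apply_eq_smul (LinearMap.mulRight k (Y c))
    (add_left_injective (0, 1, 0)) (fun q => c ^ q.2.2) (fun q => by simp [monomial_mul_Y]) w p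

lemma repr_mul_Z (w : RingQuot (relQS k c)) (p : ℕ × ℕ × ℕ) :
    (monomialBasis c).repr (w * Z c) (p + (0, 0, 1)) = (monomialBasis c).repr w p := by
  simpa using (monomialBasis c).repr_apply_of_apply_eq_smul (LinearMap.mulRight k (Z c))
    (add_left_injective _) 1 (fun q => by simp [monomial_mul_Z]) w p

lemma span_words_le_span_monomial (n : ℕ) :
    Submodule.span k {w | ∃ l : List (Fin 3), l.length = n ∧ w = (l.map (gen c)).prod} ≤
      Submodule.span k (monomial c '' {p | degree p = n}) := by
  rw [Submodule.span_le]
  rintro _ ⟨l, rfl, rfl⟩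
  obtain ⟨r, p, hp, h⟩ := prod_map_gen_eq_smul_monomial c l
  exact h ▸ Submodule.smul_mem _ r (Submodule.subset_span ⟨p, hp, rfl⟩)

variable {c} in
lemma eq_one_and_eq_of_repr_ne_zero (hcroot : ∀ m : ℕ, 1 ≤ m → c ^ m ≠ 1) {n : ℕ} {ε : k}
    {w : RingQuot (relQS k c)} (hw : w ∈ Submodule.span k (monomial c '' {p | degree p = n}))
    (hX : w * X c = ε • (X c * w)) (hY : w * Y c = ε • (Y c * w))
    (hZ : w * Z c = ε • (Z c * w)) {p : ℕ × ℕ × ℕ} (hp : (monomialBasis c).repr w p ≠ 0) :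
    ε = 1 ∧ p = (n, 0, 0) := by
  have hε : ε = 1 := by
    have h := congrArg (fun u => (monomialBasis c).repr u (p + (1, 0, 0))) hX
    simp only [← (commute_X c w).eq, map_smul, Finsupp.smul_apply, smul_eq_mul,
      repr_X_mul] at h
    exact (right_eq_mul₀ hp).1 h
  have eq_zero_of_pow_eq_one (m : ℕ) (hm : c ^ m = 1) : m = 0 := by
    by_contra h
    exact hcroot m (Nat.one_le_iff_ne_zero.2 h) hm
  have hz : p.2.2 = 0 := by
    have h := congrArg (fun u => (monomialBasis c).repr u (p + (0, 1, 0))) hY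
    simp only [map_smul, Finsupp.smul_apply, smul_eq_mul, repr_mul_Y, repr_Y_mul, hε,
      one_mul] at h
    exact eq_zero_of_pow_eq_one _ ((mul_eq_right₀ hp).1 h)
  have hy : p.2.1 = 0 := by
    have h := congrArg (fun u => (monomialBasis c).repr u (p + (0, 0, 1))) hZ
    simp only [map_smul, Finsupp.smul_apply, smul_eq_mul, repr_mul_Z, repr_Z_mul, hε,
      one_mul] at h
    exact eq_zero_of_pow_eq_one _ ((right_eq_mul₀ hp).1 h)
  have hdeg : degree p = n := by
    rw [← coe_monomialBasis, Module.Basis.mem_span_image] at hw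
    exact hw (Finsupp.mem_support_iff.2 hp)
  refine ⟨hε, Prod.ext ?_ (Prod.ext hy hz)⟩
  simp only [degree, hy, hz] at hdeg
  simpa using hdeg

variable {c} in
lemma mem_adjoin_X_sq_of_mul_eq_neg_one_pow_smul (hcroot : ∀ m : ℕ, 1 ≤ m → c ^ m ≠ 1)
    (h2 : (2 : k) ≠ 0) {n : ℕ} {w : RingQuot (relQS k c)}
    (hw : w ∈ Submodule.span k (monomial c '' {p | degree p = n}))
    (hX : w * X c = (-1 : k) ^ n • (X c * w)) (hY : w * Y c = (-1 : k) ^ n • (Y c * w))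
    (hZ : w * Z c = (-1 : k) ^ n • (Z c * w)) :
    w ∈ Algebra.adjoin k {X c ^ 2} := by
  have key {p : ℕ × ℕ × ℕ} (hp : (monomialBasis c).repr w p ≠ 0) :=
    eq_one_and_eq_of_repr_ne_zero hcroot hw hX hY hZ hp
  obtain ⟨r, hr⟩ : ∃ r, (monomialBasis c).repr w = Finsupp.single (n, 0, 0) r :=
    Finsupp.support_subset_singleton'.1 fun p hp =>
      Finset.mem_singleton.2 (key (Finsupp.mem_support_iff.1 hp)).2
  have hw_eq : w = r • X c ^ n := by
    rw [← (monomialBasis c).repr.symm_apply_apply w, hr, Module.Basis.repr_symm_single,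
      coe_monomialBasis, monomial_mk_zero_zero]
  rcases eq_or_ne r 0 with rfl | hr0
  · rw [hw_eq, zero_smul]
    exact Subalgebra.zero_mem _
  have hneg : (-1 : k) ≠ 1 := fun h => h2 (by linear_combination -h)
  obtain ⟨t, rfl⟩ : Even n :=
    (neg_one_pow_eq_one_iff_even hneg).1 (key (p := (n, 0, 0)) (by simp [hr, hr0])).1
  rw [hw_eq, ← two_mul, pow_mul]
  exact Subalgebra.smul_mem _ (Subalgebra.pow_mem _ (Algebra.self_mem_adjoin_singleton k _) t) r

end QuantumThreeSpace

open QuantumThreeSpace in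
theorem stmt13_general (k : Type*) [Field k] (c : k)
    (hcroot : ∀ m : ℕ, 1 ≤ m → c ^ m ≠ 1) (h2 : (2 : k) ≠ 0)
    (g : Fin 3 → RingQuot (relQS k c))
    (hg : ∀ i, g i = RingQuot.mkAlgHom k (relQS k c) (FreeAlgebra.ι k i))
    (𝒜 : ℕ → Submodule k (RingQuot (relQS k c)))
    (hgrading : ∀ n, 𝒜 n = Submodule.span k
      {w | ∃ l : List (Fin 3), l.length = n ∧ w = (l.map g).prod}) :
    Algebra.adjoin k {z : RingQuot (relQS k c) | ∃ n, z ∈ 𝒜 n ∧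
        ∀ (m : ℕ) (y : RingQuot (relQS k c)), y ∈ 𝒜 m →
          z * y = ((-1 : k) ^ (n * m)) • (y * z)}
      = Algebra.adjoin k {(g 0) ^ 2} := by
  obtain rfl : g = gen c := funext hg
  have gen_mem (i : Fin 3) : gen c i ∈ 𝒜 1 :=
    hgrading 1 ▸ Submodule.subset_span ⟨[i], rfl, by simp⟩
  refine le_antisymm (Algebra.adjoin_le ?_) (Algebra.adjoin_le ?_)
  · rintro w ⟨n, hwn, hw⟩
    refine mem_adjoin_X_sq_of_mul_eq_neg_one_pow_smul hcroot h2
      (span_words_le_span_monomial c n (hgrading n ▸ hwn)) ?_ ?_ ?_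
    exacts [by simpa [X] using hw 1 _ (gen_mem 0), by simpa [Y] using hw 1 _ (gen_mem 1),
      by simpa [Z] using hw 1 _ (gen_mem 2)]
  · rintro _ rfl
    refine Algebra.subset_adjoin
      ⟨2, hgrading 2 ▸ Submodule.subset_span ⟨[0, 0], rfl, by simp [sq]⟩, fun m y _ => ?_⟩
    rw [pow_mul, neg_one_sq, one_pow, one_smul]
    exact ((commute_X c y).pow_left 2).eq

theorem stmt13 (k : Type*) [Field k] (c : k) (hc : c ≠ 0)
    (hcroot : ∀ m : ℕ, 1 ≤ m → c ^ m ≠ 1) (h2 : (2 : k) ≠ 0)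
    (g : Fin 3 → RingQuot (relQS k c))
    (hg : ∀ i, g i = RingQuot.mkAlgHom k (relQS k c) (FreeAlgebra.ι k i))
    (𝒜 : ℕ → Submodule k (RingQuot (relQS k c))) [GradedAlgebra 𝒜]
    (hgrading : ∀ n, 𝒜 n = Submodule.span k
      {w | ∃ l : List (Fin 3), l.length = n ∧ w = (l.map g).prod}) :
    Algebra.adjoin k {z : RingQuot (relQS k c) | ∃ n, z ∈ 𝒜 n ∧
        ∀ (m : ℕ) (y : RingQuot (relQS k c)), y ∈ 𝒜 m →
          z * y = ((-1 : k) ^ (n * m)) • (y * z)}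
      = Algebra.adjoin k {(g 0) ^ 2} :=
  stmt13_general k c hcroot h2 g hg 𝒜 hgrading
end
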